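/- Let V be a completely distributive commutative, unital, affine quantale and 𝒫 the finite powerset functor on Set. Then there is a duality for 𝒫 along the meet modality τ_∧ : 𝒫V → V sending a finite subset S ⊆ V to ⋀S: for every V-pseudometric d and all finite subsets T₁, T₂ of its underlying set, ⋁_{T∈Ω(T₁,T₂)} ⋀_{(x,y)∈T} d(x,y) = ⋀_{f : d→d_e morphism} d_e(⋀_{x∈T₁} f(x), ⋀_{y∈T₂} f(y)). -/
import Mathlib


universe u

/-- A commutative, unital, affine quantale: a complete lattice with a commutative,
associative tensor distributing over arbitrary joins, whose unit is the top element. -/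
class AffineQuantale (V : Type u) extends CompleteLattice V where
  tensor : V → V → V
  tensor_comm : ∀ x y : V, tensor x y = tensor y x
  tensor_assoc : ∀ x y z : V, tensor (tensor x y) z = tensor x (tensor y z)
  tensor_top : ∀ x : V, tensor x ⊤ = x
  tensor_sSup : ∀ (x : V) (S : Set V), tensor x (sSup S) = ⨆ y ∈ S, tensor x y

namespace AffineQuantale

variable {V : Type u} [AffineQuantale V]

/-- The internal hom `[y,z] = ⋁ {x | x ⊗ y ≤ z}`. -/
def hom (y z : V) : V := sSup {x : V | tensor x y ≤ z}

/-- The Euclidean pseudometric `d_e(x,y) = [x,y] ⊓ [y,x]`. -/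
def de (x y : V) : V := hom x y ⊓ hom y x

end AffineQuantale

/-- A `Set` endofunctor. -/
structure SetFunctor : Type (u + 1) where
  obj : Type u → Type u
  map : ∀ {X Y : Type u}, (X → Y) → obj X → obj Y
  map_id : ∀ {X : Type u} (t : obj X), map (fun x => x) t = t
  map_comp : ∀ {X Y Z : Type u} (f : X → Y) (g : Y → Z) (t : obj X),
    map (fun x => g (f x)) t = map g (map f t)

namespace SetFunctor

open AffineQuantale

/-- Preservation of weak pullbacks. -/
def PreservesWeakPullbacks (F : SetFunctor.{u}) : Prop :=
  ∀ {X Y Z : Type u} (f : X → Z) (g : Y → Z) (a : F.obj X) (b : F.obj Y),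
    F.map f a = F.map g b →
    ∃ c : F.obj {p : X × Y // f p.1 = g p.2},
      F.map (fun p => p.1.1) c = a ∧ F.map (fun p => p.1.2) c = b

variable {V : Type u} [AffineQuantale V]

/-- A `V`-pseudometric: reflexive, symmetric, transitive map `X × X → V`. -/
def IsPMet {X : Type u} (d : X → X → V) : Prop :=
  (∀ x, d x x = ⊤) ∧ (∀ x y, d x y = d y x) ∧
    ∀ x y z, tensor (d x z) (d z y) ≤ d x y

/-- A morphism of `V`-pseudometrics. -/
def IsMor {X Y : Type u} (dX : X → X → V) (dY : Y → Y → V) (f : X → Y) : Prop :=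
  ∀ x y, dX x y ≤ dY (f x) (f y)

/-- A well-behaved modality `τ : F V → V`. -/
def WellBehaved (F : SetFunctor.{u}) (τ : F.obj V → V) : Prop :=
  (∀ {X : Type u} (p q : X → V), (∀ x, p x ≤ q x) →
      ∀ t : F.obj X, τ (F.map p t) ≤ τ (F.map q t)) ∧
  (∀ {X : Type u} (p q : X → V) (t : F.obj X),
      tensor (τ (F.map p t)) (τ (F.map q t))
        ≤ τ (F.map (fun x => tensor (p x) (q x)) t)) ∧
  Set.range (F.map (fun x : ({⊤} : Set V) => (x : V))) = {t | τ t = ⊤}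

/-- The set of couplings of `t₁` and `t₂`. -/
def couplings (F : SetFunctor.{u}) {X : Type u} (t₁ t₂ : F.obj X) :
    Set (F.obj (X × X)) :=
  {t | F.map Prod.fst t = t₁ ∧ F.map Prod.snd t = t₂}

/-- The coupling-based lifting of `F` along the modality `τ`. -/
noncomputable def couplingLift (F : SetFunctor.{u}) (τ : F.obj V → V) {X : Type u}
    (d : X → X → V) (t₁ t₂ : F.obj X) : V :=
  ⨆ t ∈ couplings F t₁ t₂, τ (F.map (fun p => d p.1 p.2) t)

/-- The codensity lifting of `F` along the set `Γ` of modalities. -/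
noncomputable def codensityLift (F : SetFunctor.{u}) (Γ : Set (F.obj V → V)) {X : Type u}
    (d : X → X → V) (t₁ t₂ : F.obj X) : V :=
  ⨅ τ' ∈ Γ, ⨅ f ∈ {f : X → V | IsMor d de f}, de (τ' (F.map f t₁)) (τ' (F.map f t₂))

/-- A correspondence `⟨F, τ, Γ⟩`: the coupling-based and codensity liftings coincide. -/
def Corresp (F : SetFunctor.{u}) (τ : F.obj V → V) (Γ : Set (F.obj V → V)) : Prop :=
  ∀ {X : Type u} (d : X → X → V), IsPMet d →
    ∀ t₁ t₂ : F.obj X, couplingLift F τ d t₁ t₂ = codensityLift F Γ d t₁ t₂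

end SetFunctor

open SetFunctor AffineQuantale

/-- The finite powerset `Set` endofunctor. -/
def finP : SetFunctor.{u} where
  obj X := {S : Set X // S.Finite}
  map f S := ⟨f '' S.1, S.2.image f⟩
  map_id S := Subtype.ext (by simp)
  map_comp f g S := Subtype.ext (by simp [Set.image_image])

/-- Complete distributivity of a complete lattice. -/
def CompletelyDistrib (V : Type u) [CompleteLattice V] : Prop :=
  ∀ {ι : Type u} {κ : ι → Type u} (x : ∀ i, κ i → V),
    ⨅ i, ⨆ j, x i j = ⨆ f : ∀ i, κ i, ⨅ i, x i (f i)

section Helpers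

variable {V : Type u} [AffineQuantale V]

lemma tensor_mono_right {a b b' : V} (h : b ≤ b') :
    tensor a b ≤ tensor a b' := by
  have h2 := tensor_sSup a ({b, b'} : Set V)
  rw [sSup_pair, sup_eq_right.mpr h] at h2
  rw [h2]
  exact le_iSup₂ (f := fun y (_ : y ∈ ({b, b'} : Set V)) => tensor a y) b (by simp)

lemma tensor_mono_left {a a' b : V} (h : a ≤ a') :
    tensor a b ≤ tensor a' b := by
  rw [tensor_comm a b, tensor_comm a' b]; exact tensor_mono_right h

lemma tensor_hom_le (y z : V) : tensor (hom y z) y ≤ z := by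
  rw [tensor_comm, hom, tensor_sSup]
  exact iSup₂_le fun x hx => by rw [tensor_comm]; exact hx

lemma le_hom_iff {x y z : V} : x ≤ hom y z ↔ tensor x y ≤ z := by
  constructor
  · intro h; exact le_trans (tensor_mono_left h) (tensor_hom_le y z)
  · intro h; exact le_sSup h

lemma hom_top_left (z : V) : hom ⊤ z = z := by
  apply le_antisymm
  · have := tensor_hom_le (⊤ : V) z; rwa [tensor_top] at this
  · exact le_sSup (by simp [tensor_top])

lemma de_top_le (z : V) : de ⊤ z ≤ z := by
  calc de ⊤ z ≤ hom ⊤ z := inf_le_left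
  _ = z := hom_top_left z

lemma de_le_top' (z : V) : de z ⊤ ≤ z := by
  calc de z ⊤ ≤ hom ⊤ z := inf_le_right
  _ = z := hom_top_left z

lemma tensor_biSup (a : V) {X : Type u} (s : Set X) (b : X → V) :
    tensor a (⨆ x ∈ s, b x) = ⨆ x ∈ s, tensor a (b x) := by
  rw [← sSup_image, tensor_sSup, iSup_image]

end Helpers

/-- If the quantale is completely distributive, there is a duality for
the finite powerset functor along the meet modality `S ↦ ⋀S`. -/

theorem duality_powerset_meet {V : Type u} [AffineQuantale V]
    (hcd : CompletelyDistrib V)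
    {X : Type u} (d : X → X → V) (hd : IsPMet d) (T₁ T₂ : finP.{u}.obj X) :
    couplingLift finP (fun S : finP.{u}.obj V => sInf S.1) d T₁ T₂
      = codensityLift finP {fun S : finP.{u}.obj V => sInf S.1} d T₁ T₂ := by
  classical
  obtain ⟨hrefl, hsymm, htri⟩ := hd
  set τ : finP.{u}.obj V → V := fun S => sInf S.1 with hτdef
  set D : X × X → V := fun p => d p.1 p.2 with hD
  apply le_antisymm
  · -- coupling ≤ codensity
    refine iSup₂_le fun t ht => ?_
    refine le_iInf₂ fun τ' hτ' => le_iInf₂ fun f hf => ?_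
    obtain rfl : τ' = τ := hτ'
    obtain ⟨ht1, ht2⟩ := ht
    have ht1' : Prod.fst '' t.1 = T₁.1 := congrArg Subtype.val ht1
    have ht2' : Prod.snd '' t.1 = T₂.1 := congrArg Subtype.val ht2
    have hf' : IsMor d de f := hf
    show sInf (D '' t.1) ≤ de (sInf (f '' T₁.1)) (sInf (f '' T₂.1))
    refine le_inf ?_ ?_
    · rw [le_hom_iff]
      refine le_sInf ?_
      rintro v ⟨y, hy, rfl⟩
      rw [← ht2'] at hy
      obtain ⟨⟨x, y⟩, hp, rfl⟩ := hy
      have h1 : sInf (D '' t.1) ≤ hom (f x) (f y) :=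
        le_trans (sInf_le ⟨(x, y), hp, rfl⟩) (le_trans (hf' x y) inf_le_left)
      have h2 : sInf (f '' T₁.1) ≤ f x :=
        sInf_le ⟨x, by rw [← ht1']; exact ⟨(x, y), hp, rfl⟩, rfl⟩
      calc tensor (sInf (D '' t.1)) (sInf (f '' T₁.1))
          ≤ tensor (hom (f x) (f y)) (f x) :=
            le_trans (tensor_mono_left h1) (tensor_mono_right h2)
        _ ≤ f y := tensor_hom_le _ _
    · rw [le_hom_iff]
      refine le_sInf ?_
      rintro v ⟨x, hx, rfl⟩
      rw [← ht1'] at hx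
      obtain ⟨⟨x, y⟩, hp, rfl⟩ := hx
      have h1 : sInf (D '' t.1) ≤ hom (f y) (f x) :=
        le_trans (sInf_le ⟨(x, y), hp, rfl⟩) (le_trans (hf' x y) inf_le_right)
      have h2 : sInf (f '' T₂.1) ≤ f y :=
        sInf_le ⟨y, by rw [← ht2']; exact ⟨(x, y), hp, rfl⟩, rfl⟩
      calc tensor (sInf (D '' t.1)) (sInf (f '' T₂.1))
          ≤ tensor (hom (f y) (f x)) (f y) :=
            le_trans (tensor_mono_left h1) (tensor_mono_right h2)
        _ ≤ f x := tensor_hom_le _ _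
  · -- codensity ≤ coupling
    set H₁ : V := ⨅ y ∈ T₂.1, ⨆ x ∈ T₁.1, d x y with hH₁
    set H₂ : V := ⨅ x ∈ T₁.1, ⨆ y ∈ T₂.1, d x y with hH₂
    have key : ∀ (s : Set X) (z w : X),
        d z w ≤ hom (⨆ x ∈ s, d x z) (⨆ x ∈ s, d x w) := by
      intro s z w
      rw [le_hom_iff, tensor_biSup]
      refine iSup₂_le fun x hx => ?_
      refine le_trans ?_ (le_iSup₂ (f := fun x (_ : x ∈ s) => d x w) x hx)
      rw [tensor_comm]; exact htri x w z
    have hmor : ∀ s : Set X, IsMor d de (fun z => ⨆ x ∈ s, d x z) := by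
      intro s z w
      exact le_inf (key s z w) (by rw [hsymm]; exact key s w z)
    have step1 : codensityLift finP {τ} d T₁ T₂ ≤ H₁ := by
      set g : X → V := fun z => ⨆ x ∈ T₁.1, d x z with hg
      have h1 : codensityLift finP {τ} d T₁ T₂
          ≤ de (τ (finP.map g T₁)) (τ (finP.map g T₂)) :=
        le_trans
          (iInf₂_le (f := fun (τ' : finP.{u}.obj V → V) (_ : τ' ∈ ({τ} : Set _)) =>
            ⨅ f ∈ {f : X → V | IsMor d de f},
              de (τ' (finP.map f T₁)) (τ' (finP.map f T₂))) τ rfl)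
          (iInf₂_le (f := fun (f : X → V) (_ : f ∈ {f | IsMor d de f}) =>
            de (τ (finP.map f T₁)) (τ (finP.map f T₂))) g (hmor T₁.1))
      have h2 : τ (finP.map g T₁) = ⊤ := by
        show sInf (g '' T₁.1) = ⊤
        refine top_unique (le_sInf ?_)
        rintro v ⟨x, hx, rfl⟩
        calc (⊤ : V) = d x x := (hrefl x).symm
          _ ≤ g x := le_iSup₂ (f := fun x' (_ : x' ∈ T₁.1) => d x' x) x hx
      refine le_trans h1 ?_
      rw [h2]
      refine le_trans (de_top_le _) ?_
      show sInf (g '' T₂.1) ≤ H₁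
      exact le_iInf₂ fun y hy => sInf_le ⟨y, hy, rfl⟩
    have step2 : codensityLift finP {τ} d T₁ T₂ ≤ H₂ := by
      set g : X → V := fun z => ⨆ y ∈ T₂.1, d y z with hg
      have h1 : codensityLift finP {τ} d T₁ T₂
          ≤ de (τ (finP.map g T₁)) (τ (finP.map g T₂)) :=
        le_trans
          (iInf₂_le (f := fun (τ' : finP.{u}.obj V → V) (_ : τ' ∈ ({τ} : Set _)) =>
            ⨅ f ∈ {f : X → V | IsMor d de f},
              de (τ' (finP.map f T₁)) (τ' (finP.map f T₂))) τ rfl)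
          (iInf₂_le (f := fun (f : X → V) (_ : f ∈ {f | IsMor d de f}) =>
            de (τ (finP.map f T₁)) (τ (finP.map f T₂))) g (hmor T₂.1))
      have h2 : τ (finP.map g T₂) = ⊤ := by
        show sInf (g '' T₂.1) = ⊤
        refine top_unique (le_sInf ?_)
        rintro v ⟨y, hy, rfl⟩
        calc (⊤ : V) = d y y := (hrefl y).symm
          _ ≤ g y := le_iSup₂ (f := fun y' (_ : y' ∈ T₂.1) => d y' y) y hy
      refine le_trans h1 ?_
      rw [h2]
      refine le_trans (de_le_top' _) ?_
      show sInf (g '' T₁.1) ≤ H₂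
      refine le_iInf₂ fun x hx => ?_
      refine le_trans (sInf_le ⟨x, hx, rfl⟩) ?_
      refine iSup₂_le fun y hy => ?_
      rw [hsymm]
      exact le_iSup₂ (f := fun y' (_ : y' ∈ T₂.1) => d x y') y hy
    refine le_trans (le_inf step1 step2) ?_
    -- now show H₁ ⊓ H₂ ≤ couplingLift
    rcases Set.eq_empty_or_nonempty T₁.1 with h1 | ⟨x₀, hx₀⟩
    · rcases Set.eq_empty_or_nonempty T₂.1 with h2 | ⟨y₀, hy₀⟩
      · -- both empty: empty coupling gives ⊤
        have hc : (⟨∅, Set.finite_empty⟩ : finP.{u}.obj (X × X))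
            ∈ couplings finP T₁ T₂ := by
          constructor <;> apply Subtype.ext <;>
            simp [finP, ← Subtype.val_inj, h1, h2]
        refine le_trans le_top ?_
        refine le_iSup₂_of_le _ hc ?_
        show (⊤ : V) ≤ sInf (D '' (∅ : Set (X × X)))
        simp
      · -- T₁ empty, T₂ nonempty : H₁ = ⊥
        refine le_trans inf_le_left ?_
        refine le_trans (iInf₂_le y₀ hy₀) ?_
        simp [h1]
    · rcases Set.eq_empty_or_nonempty T₂.1 with h2 | ⟨y₀, hy₀⟩
      · refine le_trans inf_le_right ?_
        refine le_trans (iInf₂_le x₀ hx₀) ?_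
        simp [h2]
      · -- both nonempty: complete distributivity
        haveI : Finite (↥T₁.1) := T₁.2.to_subtype
        haveI : Finite (↥T₂.1) := T₂.2.to_subtype
        set ι : Type u := ↥T₁.1 ⊕ ↥T₂.1 with hι
        set κ : ι → Type u :=
          fun i => Sum.rec (fun _ => ↥T₂.1) (fun _ => ↥T₁.1) i with hκ
        set w : ∀ i, κ i → V :=
          fun i => Sum.rec (motive := fun i => κ i → V)
            (fun a b => d a b) (fun b a => d a b) i with hw
        have hdist := hcd w
        have hle : H₁ ⊓ H₂ ≤ ⨅ i, ⨆ j, w i j := by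
          refine le_iInf fun i => ?_
          cases i with
          | inl a =>
            refine le_trans inf_le_right ?_
            refine le_trans (iInf₂_le (a : X) a.2) ?_
            refine iSup₂_le fun y hy => ?_
            exact le_iSup (fun j : ↥T₂.1 => d a j) ⟨y, hy⟩
          | inr b =>
            refine le_trans inf_le_left ?_
            refine le_trans (iInf₂_le (b : X) b.2) ?_
            refine iSup₂_le fun x hx => ?_
            exact le_iSup (fun j : ↥T₁.1 => d j b) ⟨x, hx⟩
        refine le_trans hle ?_
        rw [hdist]
        refine iSup_le fun f => ?_
        set S : Set (X × X) :=
          Set.range (fun a : ↥T₁.1 => ((a : X), ((f (Sum.inl a) : ↥T₂.1) : X)))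
            ∪ Set.range (fun b : ↥T₂.1 => (((f (Sum.inr b) : ↥T₁.1) : X), (b : X)))
          with hS
        have hSfin : S.Finite := (Set.finite_range _).union (Set.finite_range _)
        have hc : (⟨S, hSfin⟩ : finP.{u}.obj (X × X)) ∈ couplings finP T₁ T₂ := by
          constructor
          · apply Subtype.ext
            show Prod.fst '' S = T₁.1
            ext z
            simp only [hS, Set.image_union, ← Set.range_comp, Function.comp,
              Set.mem_union, Set.mem_range]
            constructor
            · rintro (⟨a, rfl⟩ | ⟨b, rfl⟩)
              · exact a.2
              · exact (f (Sum.inr b) : ↥T₁.1).2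
            · intro hz; exact Or.inl ⟨⟨z, hz⟩, rfl⟩
          · apply Subtype.ext
            show Prod.snd '' S = T₂.1
            ext z
            simp only [hS, Set.image_union, ← Set.range_comp, Function.comp,
              Set.mem_union, Set.mem_range]
            constructor
            · rintro (⟨a, rfl⟩ | ⟨b, rfl⟩)
              · exact (f (Sum.inl a) : ↥T₂.1).2
              · exact b.2
            · intro hz; exact Or.inr ⟨⟨z, hz⟩, rfl⟩
        refine le_iSup₂_of_le _ hc ?_
        show ⨅ i, w i (f i) ≤ sInf (D '' S)
        refine le_sInf ?_
        rintro v ⟨p, hp, rfl⟩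
        rcases hp with ⟨a, rfl⟩ | ⟨b, rfl⟩
        · exact iInf_le (fun i => w i (f i)) (Sum.inl a)
        · exact iInf_le (fun i => w i (f i)) (Sum.inr b)
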